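/- Let π be a linked partition in NCL(n), let A be a block of π, and let W be the unique block of π̂ with W ⊇ A. Then min(A) is singly-covered by π if and only if min(A) = min(W). -/

import Mathlib

open scoped Classical

/-- The minimum of a finset of naturals (`0` if empty). -/
noncomputable def fmin (A : Finset ℕ) : ℕ := sInf (A : Set ℕ)

/-- The maximum of a finset of naturals (`0` if empty). -/
noncomputable def fmax (A : Finset ℕ) : ℕ := sSup (A : Set ℕ)

/-- `α` is a partition of the finite set `F ⊆ ℕ`. -/
def IsPartitionOfSet (F : Finset ℕ) (α : Finset (Finset ℕ)) : Prop :=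
  (∀ V ∈ α, V.Nonempty) ∧ (∀ V ∈ α, V ⊆ F) ∧ (∀ m ∈ F, ∃ V ∈ α, m ∈ V) ∧
    ∀ V ∈ α, ∀ W ∈ α, V ≠ W → V ∩ W = ∅

/-- `α` is a partition of `{1,…,n}`. -/
def IsPartitionOf (n : ℕ) (α : Finset (Finset ℕ)) : Prop :=
  IsPartitionOfSet (Finset.Icc 1 n) α

/-- Two distinct blocks of the family `π` cross: there are `a < b < c < d` with
`a, c` in one block and `b, d` in a different block. -/
def IsCrossing (π : Finset (Finset ℕ)) : Prop :=
  ∃ A ∈ π, ∃ B ∈ π, A ≠ B ∧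
    ∃ a ∈ A, ∃ b ∈ B, ∃ c ∈ A, ∃ d ∈ B, a < b ∧ b < c ∧ c < d

/-- `α ∈ NC(n)`: a non-crossing partition of `{1,…,n}`. -/
def IsNCPartition (n : ℕ) (α : Finset (Finset ℕ)) : Prop :=
  IsPartitionOf n α ∧ ¬ IsCrossing α

/-- Reverse refinement order `α ≤ β`: every block of `α` is contained in a block of `β`
(equivalently, every block of `β` is a union of blocks of `α`). -/
def Refines (α β : Finset (Finset ℕ)) : Prop := ∀ V ∈ α, ∃ W ∈ β, V ⊆ W

/-- The partial order `α ≪ β`: `α ≤ β` and for every block `W` of `β` there is a block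
`V` of `α` containing both `min W` and `max W`. -/
def LL (α β : Finset (Finset ℕ)) : Prop :=
  Refines α β ∧ ∀ W ∈ β, ∃ V ∈ α, fmin W ∈ V ∧ fmax W ∈ V

/-- A block `V` (of `α`) is `β`-special: some block `W` of `β` has the same min and max. -/
def SpecialBlock (β : Finset (Finset ℕ)) (V : Finset ℕ) : Prop :=
  ∃ W ∈ β, fmin V = fmin W ∧ fmax V = fmax W

/-- `V` is an outer block of `α`: no block of `α` strictly nests around it. -/
def OuterBlock (α : Finset (Finset ℕ)) (V : Finset ℕ) : Prop :=
  ∀ V' ∈ α, ¬ (fmin V' < fmin V ∧ fmax V < fmax V')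

/-- `π` is a linked partition of the finite set `F ⊆ ℕ`. -/
def IsLinkedPartitionOfSet (F : Finset ℕ) (π : Finset (Finset ℕ)) : Prop :=
  (∀ A ∈ π, A.Nonempty) ∧ (∀ A ∈ π, A ⊆ F) ∧ (∀ m ∈ F, ∃ A ∈ π, m ∈ A) ∧
    ∀ A ∈ π, ∀ B ∈ π, A ≠ B →
      A ∩ B = ∅ ∨
        (2 ≤ A.card ∧ 2 ≤ B.card ∧ (A ∩ B).card = 1 ∧ fmin A ≠ fmin B ∧
          ∀ x ∈ A ∩ B, x = fmin A ∨ x = fmin B)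

/-- `π ∈ NCL(F)`: a non-crossing linked partition of the finite set `F`. -/
def IsNCLOfSet (F : Finset ℕ) (π : Finset (Finset ℕ)) : Prop :=
  IsLinkedPartitionOfSet F π ∧ ¬ IsCrossing π

/-- `π ∈ NCL(n)`: a non-crossing linked partition of `{1,…,n}`. -/
def IsNCL (n : ℕ) (π : Finset (Finset ℕ)) : Prop :=
  IsNCLOfSet (Finset.Icc 1 n) π

/-- The number of blocks of `π` containing `m`. -/
noncomputable def coverCount (π : Finset (Finset ℕ)) (m : ℕ) : ℕ :=
  (π.filter fun A => m ∈ A).card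

/-- `m` is singly-covered by `π`: it lies in exactly one block. -/
def SinglyCovered (π : Finset (Finset ℕ)) (m : ℕ) : Prop := coverCount π m = 1

/-- `m` is doubly-covered by `π`: it lies in exactly two blocks. -/
def DoublyCovered (π : Finset (Finset ℕ)) (m : ℕ) : Prop := coverCount π m = 2

/-- The partition `π̂` generated by the blocks of `π`: its blocks are the connected
components of the ground set under the relation of lying in a common block of `π`. -/
noncomputable def genPart (π : Finset (Finset ℕ)) : Finset (Finset ℕ) :=
  (π.sup id).image fun m =>
    (π.sup id).filter fun x =>
      Relation.EqvGen (fun a b => ∃ A ∈ π, a ∈ A ∧ b ∈ A) m x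

/-- The unlinking `π̌` of a linked partition `π`. -/
noncomputable def unlink (π : Finset (Finset ℕ)) : Finset (Finset ℕ) :=
  π.image fun A => if SinglyCovered π (fmin A) then A else A.erase (fmin A)

/-- The block of `α` containing `m` (empty if there is none). -/
noncomputable def blockOf (α : Finset (Finset ℕ)) (m : ℕ) : Finset ℕ :=
  (α.filter fun V => m ∈ V).sup id

/-- The successor of `m` in the cycle on the block `V` (elements in increasing order). -/
noncomputable def nextInBlock (V : Finset ℕ) (m : ℕ) : ℕ :=
  if m = fmax V then fmin V else fmin (V.filter fun x => m < x)

/-- The predecessor of `m` in the cycle on the block `V`. -/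
noncomputable def prevInBlock (V : Finset ℕ) (m : ℕ) : ℕ :=
  if m = fmin V then fmax V else fmax (V.filter fun x => x < m)

/-- The permutation `P_α` associated to a partition `α`, as a function: each block
`{i₁ < i₂ < ⋯ < iₘ}` becomes the cycle `i₁ ↦ i₂ ↦ ⋯ ↦ iₘ ↦ i₁`. -/
noncomputable def permOf (α : Finset (Finset ℕ)) (m : ℕ) : ℕ :=
  if m ∈ blockOf α m then nextInBlock (blockOf α m) m else m

/-- The inverse permutation `P_α⁻¹`, as a function. -/
noncomputable def permOfInv (α : Finset (Finset ℕ)) (m : ℕ) : ℕ :=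
  if m ∈ blockOf α m then prevInBlock (blockOf α m) m else m

/-- The action `τ·α` of a map `τ` on a partition `α = {V₁,…,V_p}`, giving
`{τ(V₁),…,τ(V_p)}`. -/
def mapPart (τ : ℕ → ℕ) (α : Finset (Finset ℕ)) : Finset (Finset ℕ) :=
  α.image fun V => V.image τ

/-- The cycled unlinking `π° := P_{π̂}⁻¹ · π̌`. -/
noncomputable def cycUnlink (π : Finset (Finset ℕ)) : Finset (Finset ℕ) :=
  mapPart (permOfInv (genPart π)) (unlink π)

/-- `NC(n)` as a finset. -/
noncomputable def NCF (n : ℕ) : Finset (Finset (Finset ℕ)) :=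
  ((Finset.Icc 1 n).powerset.powerset).filter (IsNCPartition n)

/-- `NCL(n)` as a finset. -/
noncomputable def NCLF (n : ℕ) : Finset (Finset (Finset ℕ)) :=
  ((Finset.Icc 1 n).powerset.powerset).filter (IsNCL n)

/-- The restriction `π|_E`: the blocks of `π` contained in `E`. -/
def restrictL (π : Finset (Finset ℕ)) (E : Finset ℕ) : Finset (Finset ℕ) :=
  π.filter fun A => A ⊆ E

/-- The partition `β₀` obtained from `β` by leaving blocks of size `≤ 2` intact and
breaking each block `W` with `|W| ≥ 3` into the doubleton `{min W, max W}` together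
with `|W| - 2` singletons. -/
noncomputable def breakBlocks (β : Finset (Finset ℕ)) : Finset (Finset ℕ) :=
  β.biUnion fun W =>
    if W.card ≤ 2 then {W}
    else insert {fmin W, fmax W} ((W \ {fmin W, fmax W}).image fun x => ({x} : Finset ℕ))

/-!
Call a block `Y ≠ X` of a linked partition the parent of `X` when `min X ∈ Y`. Since `min X`
lies in at most two blocks, every block has at most one parent, and it has none exactly when its
minimum is singly covered. Two distinct blocks sharing an element are parent and child, so within
a block `W` of `π̂` every block reaches, by following parents, the block containing `min W`.
That root has no parent, for any two blocks containing `min W` would both have minimum `min W`.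
Hence a block with singly covered minimum, having no parent, is the root, and its minimum is
`min W`.
-/

theorem Relation.ReflTransGen.of_rel_of_functional {α : Type*} {r : α → α → Prop} {a b c : α}
    (hab : ReflTransGen r a b) (hac : r a c) (hr : ∀ a b c, r a b → r a c → b = c)
    (hb : ∀ d, ¬ r b d) : ReflTransGen r c b := by
  rcases hab.cases_head with rfl | ⟨d, had, hdb⟩
  · exact absurd hac (hb c)
  · rwa [hr a c d hac had]

theorem fmin_mem {A : Finset ℕ} (h : A.Nonempty) : fmin A ∈ A := by
  simpa [fmin] using Nat.sInf_mem (s := (A : Set ℕ)) (by exact_mod_cast h)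

theorem fmin_le {A : Finset ℕ} {a : ℕ} (h : a ∈ A) : fmin A ≤ a :=
  Nat.sInf_le (by simpa using h)

theorem fmin_eq_of_subset_of_fmin_mem {B W : Finset ℕ} (hBW : B ⊆ W) (h : fmin W ∈ B) :
    fmin B = fmin W :=
  le_antisymm (fmin_le h) (fmin_le (hBW (fmin_mem ⟨_, h⟩)))

theorem SinglyCovered.eq_of_mem {π : Finset (Finset ℕ)} {x : ℕ} (hs : SinglyCovered π x)
    {D E : Finset ℕ} (hD : D ∈ π) (hE : E ∈ π) (hxD : x ∈ D) (hxE : x ∈ E) : D = E :=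
  Finset.card_le_one.mp hs.le D (Finset.mem_filter.mpr ⟨hD, hxD⟩) E
    (Finset.mem_filter.mpr ⟨hE, hxE⟩)

def SharesBlock (π : Finset (Finset ℕ)) (a b : ℕ) : Prop := ∃ A ∈ π, a ∈ A ∧ b ∈ A

instance (π : Finset (Finset ℕ)) : Std.Symm (SharesBlock π) :=
  ⟨fun _ _ ⟨A, hA, ha, hb⟩ => ⟨A, hA, hb, ha⟩⟩

def LinkParent (π : Finset (Finset ℕ)) (X Y : Finset ℕ) : Prop :=
  X ∈ π ∧ Y ∈ π ∧ Y ≠ X ∧ fmin X ∈ Y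

theorem SinglyCovered.not_linkParent {π : Finset (Finset ℕ)} {X Y : Finset ℕ}
    (hs : SinglyCovered π (fmin X)) (hXne : X.Nonempty) : ¬ LinkParent π X Y :=
  fun ⟨hX, hY, hYX, hXY⟩ => hYX (hs.eq_of_mem hY hX hXY (fmin_mem hXne))

section genPart

variable {π : Finset (Finset ℕ)} {W : Finset ℕ}

theorem exists_eqvGen_of_mem_genPart (hW : W ∈ genPart π) :
    ∃ m, ∀ x, x ∈ W ↔ x ∈ π.sup id ∧ Relation.EqvGen (SharesBlock π) m x := by
  obtain ⟨m, -, rfl⟩ := Finset.mem_image.mp hW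
  exact ⟨m, fun x => Finset.mem_filter⟩

theorem subset_of_mem_genPart (hW : W ∈ genPart π) {B : Finset ℕ} (hB : B ∈ π) {y : ℕ}
    (hyB : y ∈ B) (hyW : y ∈ W) : B ⊆ W := by
  obtain ⟨m, hmem⟩ := exists_eqvGen_of_mem_genPart hW
  intro z hzB
  rw [hmem] at hyW ⊢
  exact ⟨Finset.mem_sup.mpr ⟨B, hB, hzB⟩, hyW.2.trans _ _ _ (.rel _ _ ⟨B, hB, hyB, hzB⟩)⟩

theorem exists_mem_of_mem_genPart (hW : W ∈ genPart π) {x : ℕ} (hx : x ∈ W) :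
    ∃ B ∈ π, x ∈ B := by
  obtain ⟨m, hmem⟩ := exists_eqvGen_of_mem_genPart hW
  simpa using ((hmem x).mp hx).1

theorem reflTransGen_of_mem_genPart (hW : W ∈ genPart π) {x y : ℕ} (hx : x ∈ W) (hy : y ∈ W) :
    Relation.ReflTransGen (SharesBlock π) x y := by
  obtain ⟨m, hmem⟩ := exists_eqvGen_of_mem_genPart hW
  rw [← Relation.EqvGen.eqvGen_eq_reflTransGen]
  exact (((hmem x).mp hx).2.symm _ _).trans _ _ _ ((hmem y).mp hy).2

end genPart

namespace IsLinkedPartitionOfSet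

variable {F : Finset ℕ} {π : Finset (Finset ℕ)}

theorem fmin_ne_and_eq_fmin_or_eq_fmin (hπ : IsLinkedPartitionOfSet F π) {D E : Finset ℕ}
    (hD : D ∈ π) (hE : E ∈ π) (hne : D ≠ E) {x : ℕ} (hxD : x ∈ D) (hxE : x ∈ E) :
    fmin D ≠ fmin E ∧ (x = fmin D ∨ x = fmin E) := by
  have hx : x ∈ D ∩ E := Finset.mem_inter.mpr ⟨hxD, hxE⟩
  rcases hπ.2.2.2 D hD E hE hne with h | ⟨-, -, -, hmin, hlink⟩
  · simp [h] at hx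
  · exact ⟨hmin, hlink x hx⟩

theorem eq_or_eq_of_mem (hπ : IsLinkedPartitionOfSet F π) {D E G : Finset ℕ} (hD : D ∈ π)
    (hE : E ∈ π) (hG : G ∈ π) (hDE : D ≠ E) {x : ℕ} (hxD : x ∈ D) (hxE : x ∈ E) (hxG : x ∈ G) :
    G = D ∨ G = E := by
  by_contra! ⟨hGD, hGE⟩
  have := hπ.fmin_ne_and_eq_fmin_or_eq_fmin hD hE hDE hxD hxE
  have := hπ.fmin_ne_and_eq_fmin_or_eq_fmin hD hG hGD.symm hxD hxG
  have := hπ.fmin_ne_and_eq_fmin_or_eq_fmin hE hG hGE.symm hxE hxG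
  omega

theorem linkParent_functional (hπ : IsLinkedPartitionOfSet F π) {X Y Y' : Finset ℕ}
    (h : LinkParent π X Y) (h' : LinkParent π X Y') : Y = Y' := by
  obtain ⟨hX, hY, hYX, hXY⟩ := h
  obtain ⟨-, hY', hY'X, hXY'⟩ := h'
  have hXX := fmin_mem (hπ.1 X hX)
  exact ((hπ.eq_or_eq_of_mem hX hY hY' hYX.symm hXX hXY hXY').resolve_left hY'X).symm

theorem reflTransGen_linkParent_of_mem (hπ : IsLinkedPartitionOfSet F π) {R D E : Finset ℕ}
    (hR : ∀ Y, ¬ LinkParent π R Y) (hD : D ∈ π) (hE : E ∈ π) {y : ℕ} (hyD : y ∈ D) (hyE : y ∈ E)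
    (hDR : Relation.ReflTransGen (LinkParent π) D R) :
    Relation.ReflTransGen (LinkParent π) E R := by
  by_cases hED : E = D
  · rwa [hED]
  rcases (hπ.fmin_ne_and_eq_fmin_or_eq_fmin hD hE (Ne.symm hED) hyD hyE).2 with rfl | rfl
  · exact hDR.of_rel_of_functional ⟨hD, hE, hED, hyE⟩
      (fun _ _ _ h h' => hπ.linkParent_functional h h') hR
  · exact .head ⟨hE, hD, Ne.symm hED, hyD⟩ hDR

variable {W : Finset ℕ}

theorem singlyCovered_fmin_of_mem_genPart (hπ : IsLinkedPartitionOfSet F π) (hW : W ∈ genPart π)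
    (hWne : W.Nonempty) : SinglyCovered π (fmin W) := by
  obtain ⟨B, hB, hminB⟩ := exists_mem_of_mem_genPart hW (fmin_mem hWne)
  have hblock : ∀ D ∈ π, fmin W ∈ D → D = B := fun D hD hminD => by
    by_contra hDB
    refine (hπ.fmin_ne_and_eq_fmin_or_eq_fmin hD hB hDB hminD hminB).1 ?_
    rw [fmin_eq_of_subset_of_fmin_mem (subset_of_mem_genPart hW hD hminD (fmin_mem hWne)) hminD,
      fmin_eq_of_subset_of_fmin_mem (subset_of_mem_genPart hW hB hminB (fmin_mem hWne)) hminB]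
  refine Finset.card_eq_one.mpr ⟨B, Finset.eq_singleton_iff_unique_mem.mpr ⟨?_, ?_⟩⟩
  · exact Finset.mem_filter.mpr ⟨hB, hminB⟩
  · exact fun D hD => hblock D (Finset.mem_filter.mp hD).1 (Finset.mem_filter.mp hD).2

theorem reflTransGen_linkParent_of_subset (hπ : IsLinkedPartitionOfSet F π) (hW : W ∈ genPart π)
    {R : Finset ℕ} (hR : R ∈ π) (hminR : fmin W ∈ R) {D : Finset ℕ} (hD : D ∈ π) (hDW : D ⊆ W) :
    Relation.ReflTransGen (LinkParent π) D R := by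
  have hWne : W.Nonempty := (hπ.1 D hD).mono hDW
  have hroot := hπ.singlyCovered_fmin_of_mem_genPart hW hWne
  have hRroot : ∀ Y, ¬ LinkParent π R Y := fun Y => by
    refine SinglyCovered.not_linkParent ?_ ⟨_, hminR⟩
    rwa [fmin_eq_of_subset_of_fmin_mem (subset_of_mem_genPart hW hR hminR (fmin_mem hWne)) hminR]
  have hreach : ∀ x, Relation.ReflTransGen (SharesBlock π) (fmin W) x →
      ∀ D ∈ π, x ∈ D → Relation.ReflTransGen (LinkParent π) D R := by
    intro x hx
    induction hx with
    | refl => exact fun D hD hminD => by rw [hroot.eq_of_mem hD hR hminD hminR]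
    | tail _ hxy ih =>
      obtain ⟨E, hE, hxE, hyE⟩ := hxy
      exact fun D hD hyD => hπ.reflTransGen_linkParent_of_mem hRroot hE hD hyE hyD (ih E hE hxE)
  have hminD := fmin_mem (hπ.1 D hD)
  exact hreach _ (reflTransGen_of_mem_genPart hW (fmin_mem hWne) (hDW hminD)) D hD hminD

end IsLinkedPartitionOfSet

/-- Let `π ∈ NCL(n)`, let `A` be a block of `π`, and let `W` be the
(unique) block of `π̂` with `W ⊇ A`. Then `min A` is singly-covered by `π` if and only
if `min A = min W`. -/
theorem stmt14 (n : ℕ) (π : Finset (Finset ℕ)) (hπ : IsNCL n π)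
    (A : Finset ℕ) (hA : A ∈ π)
    (W : Finset ℕ) (hW : W ∈ genPart π) (hAW : A ⊆ W) :
    SinglyCovered π (fmin A) ↔ fmin A = fmin W := by
  obtain ⟨hlp, -⟩ := hπ
  have hAne := hlp.1 A hA
  have hWne : W.Nonempty := hAne.mono hAW
  obtain ⟨R, hR, hminR⟩ := exists_mem_of_mem_genPart hW (fmin_mem hWne)
  constructor
  · intro hsingle
    rcases (hlp.reflTransGen_linkParent_of_subset hW hR hminR hA hAW).cases_head with
      rfl | ⟨Y, hAY, -⟩
    · exact fmin_eq_of_subset_of_fmin_mem hAW hminR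
    · exact absurd hAY (hsingle.not_linkParent hAne)
  · intro hmin
    rw [hmin]
    exact hlp.singlyCovered_fmin_of_mem_genPart hW hWne
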